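/- Consider the Bayesian belief update π ↦ T(π,k) defined on the probability simplex S ⊂ ℝ^d by T(π,k)' = π' P D_k / (π' P d_k), where P is a d×d substochastic matrix, D_k = diag(d_k), and d_k ∈ ℝ^d₊. If both P and the matrix D = (d_{jk})_{j,k} are TP2, then: (a) π⁽¹⁾ ⪰_LR π⁽²⁾ implies T(π⁽¹⁾,k) ⪰_LR T(π⁽²⁾,k) for every k; and (b) k₁ ≥ k₂ implies T(π,k₁) ⪰_LR T(π,k₂) for every π. -/
import Mathlib


/-- Monotone likelihood ratio (MLR) order: `u ⪰_LR v` iff `uᵢ vⱼ ≥ uⱼ vᵢ` for all `i > j`. -/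
def MLR {d : ℕ} (u v : Fin d → ℝ) : Prop :=
  ∀ i j : Fin d, j < i → u j * v i ≤ u i * v j

/-- A nonnegative matrix `M` is TP2 if `M_{ik} M_{i'k'} ≥ M_{ik'} M_{i'k}` for `i ≤ i'`,
`k ≤ k'`. -/
def IsTP2 {m n : ℕ} (M : Matrix (Fin m) (Fin n) ℝ) : Prop :=
  (∀ i k, 0 ≤ M i k) ∧
    ∀ i i' : Fin m, ∀ k k' : Fin n, i ≤ i' → k ≤ k' → M i k' * M i' k ≤ M i k * M i' k'

/-- Key lemma: MLR is preserved by a TP2 kernel. -/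
lemma mlr_kernel {d : ℕ} (P : Matrix (Fin d) (Fin d) ℝ) (hP : IsTP2 P)
    (π₁ π₂ : Fin d → ℝ) (h1 : ∀ a, 0 ≤ π₁ a) (h2 : ∀ a, 0 ≤ π₂ a) (hm : MLR π₁ π₂)
    {i j : Fin d} (hij : j < i) :
    (∑ a, π₁ a * P a j) * (∑ b, π₂ b * P b i) ≤
      (∑ a, π₁ a * P a i) * (∑ b, π₂ b * P b j) := by
  obtain ⟨hPnn, hPtp⟩ := hP
  set f : Fin d → Fin d → ℝ := fun a b =>
    (π₁ a * P a i) * (π₂ b * P b j) - (π₁ a * P a j) * (π₂ b * P b i) with hf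
  have haux : ∀ a b : Fin d, a ≤ b → 0 ≤ f a b + f b a := by
    intro a b hab
    rcases eq_or_lt_of_le hab with rfl | hab'
    · simp only [hf]; ring_nf; nlinarith [sq_nonneg ((π₁ a * P a i) * (π₂ a * P a j))]
    · have hmlr : π₁ a * π₂ b ≤ π₁ b * π₂ a := hm b a hab'
      have htp : P a i * P b j ≤ P a j * P b i := hPtp a b j i hab hij.le
      have heq : f a b + f b a =
          (π₁ b * π₂ a - π₁ a * π₂ b) * (P a j * P b i - P a i * P b j) := by
        simp only [hf]; ring
      rw [heq]
      exact mul_nonneg (sub_nonneg.2 hmlr) (sub_nonneg.2 htp)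
  have hpair : ∀ a b : Fin d, 0 ≤ f a b + f b a := by
    intro a b
    rcases le_total a b with h | h
    · exact haux a b h
    · have := haux b a h; linarith
  rw [← sub_nonneg]
  have expand : ∀ (c c' : Fin d),
      (∑ a, π₁ a * P a c) * (∑ b, π₂ b * P b c')
        = ∑ a, ∑ b, (π₁ a * P a c) * (π₂ b * P b c') := fun c c' =>
    Finset.sum_mul_sum _ _ _ _
  have hsum : (∑ a, π₁ a * P a i) * (∑ b, π₂ b * P b j)
      - (∑ a, π₁ a * P a j) * (∑ b, π₂ b * P b i) = ∑ a, ∑ b, f a b := by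
    rw [expand, expand, ← Finset.sum_sub_distrib]
    exact Finset.sum_congr rfl fun a _ => by rw [← Finset.sum_sub_distrib]
  rw [hsum]
  have hcomm : (∑ a, ∑ b, f a b) = ∑ a, ∑ b, f b a := by rw [Finset.sum_comm]
  have h2sum : (2:ℝ) * ∑ a, ∑ b, f a b = ∑ a, ∑ b, (f a b + f b a) := by
    rw [two_mul]
    nth_rw 2 [hcomm]
    rw [← Finset.sum_add_distrib]
    exact Finset.sum_congr rfl fun a _ => by rw [← Finset.sum_add_distrib]
  have hnn : 0 ≤ ∑ a, ∑ b, (f a b + f b a) :=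
    Finset.sum_nonneg fun a _ => Finset.sum_nonneg fun b _ => hpair a b
  linarith

/-- Bayesian belief update `T(π,k)' = π'P·diag(d_k)/(π'P d_k)` on the
probability simplex, where `P` is substochastic and `d_k` is the `k`-th column of `D`.
If `P` and `D` are TP2 then (a) `π⁽¹⁾ ⪰_LR π⁽²⁾` implies `T(π⁽¹⁾,k) ⪰_LR T(π⁽²⁾,k)`;
(b) `k₁ ≥ k₂` implies `T(π,k₁) ⪰_LR T(π,k₂)`. -/
theorem stmt9 {d K : ℕ}
    (P : Matrix (Fin d) (Fin d) ℝ) (D : Matrix (Fin d) (Fin K) ℝ)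
    (hProw : ∀ i, ∑ j, P i j ≤ 1)
    (hPTP2 : IsTP2 P) (hDTP2 : IsTP2 D)
    (T : (Fin d → ℝ) → Fin K → Fin d → ℝ)
    (hT : ∀ π k j, T π k j =
      (∑ i, π i * P i j) * D j k / (∑ j', (∑ i, π i * P i j') * D j' k))
    (hpos : ∀ π ∈ stdSimplex ℝ (Fin d), ∀ k, 0 < ∑ j', (∑ i, π i * P i j') * D j' k) :
    (∀ π₁ ∈ stdSimplex ℝ (Fin d), ∀ π₂ ∈ stdSimplex ℝ (Fin d),
        MLR π₁ π₂ → ∀ k, MLR (T π₁ k) (T π₂ k)) ∧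
    (∀ π ∈ stdSimplex ℝ (Fin d), ∀ k₁ k₂ : Fin K, k₂ ≤ k₁ → MLR (T π k₁) (T π k₂)) := by
  obtain ⟨hDnn, hDtp⟩ := hDTP2
  constructor
  · intro π₁ h₁ π₂ h₂ hm k i j hij
    have hZ₁ := hpos π₁ h₁ k
    have hZ₂ := hpos π₂ h₂ k
    rw [hT, hT, hT, hT, div_mul_div_comm, div_mul_div_comm]
    refine div_le_div_of_nonneg_right ?_ (mul_pos hZ₁ hZ₂).le
    · have hk := mlr_kernel P hPTP2 π₁ π₂ (fun a => (h₁.1 a)) (fun a => (h₂.1 a)) hm hij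
      have hD : 0 ≤ D j k * D i k := mul_nonneg (hDnn j k) (hDnn i k)
      calc (∑ a, π₁ a * P a j) * D j k * ((∑ b, π₂ b * P b i) * D i k)
          = (D j k * D i k) * ((∑ a, π₁ a * P a j) * (∑ b, π₂ b * P b i)) := by ring
        _ ≤ (D j k * D i k) * ((∑ a, π₁ a * P a i) * (∑ b, π₂ b * P b j)) :=
            mul_le_mul_of_nonneg_left hk hD
        _ = (∑ a, π₁ a * P a i) * D i k * ((∑ b, π₂ b * P b j) * D j k) := by ring
  · intro π hπ k₁ k₂ hk i j hij
    have hZ₁ := hpos π hπ k₁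
    have hZ₂ := hpos π hπ k₂
    rw [hT, hT, hT, hT, div_mul_div_comm, div_mul_div_comm]
    refine div_le_div_of_nonneg_right ?_ (mul_pos hZ₁ hZ₂).le
    · have hPnn := hPTP2.1
      have hq : ∀ c : Fin d, 0 ≤ ∑ a, π a * P a c := fun c =>
        Finset.sum_nonneg fun a _ => mul_nonneg (hπ.1 a) (hPnn a c)
      have htp : D j k₁ * D i k₂ ≤ D j k₂ * D i k₁ := hDtp j i k₂ k₁ hij.le hk
      have hqq : 0 ≤ (∑ a, π a * P a j) * (∑ a, π a * P a i) :=
        mul_nonneg (hq j) (hq i)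
      calc (∑ a, π a * P a j) * D j k₁ * ((∑ a, π a * P a i) * D i k₂)
          = ((∑ a, π a * P a j) * (∑ a, π a * P a i)) * (D j k₁ * D i k₂) := by ring
        _ ≤ ((∑ a, π a * P a j) * (∑ a, π a * P a i)) * (D j k₂ * D i k₁) :=
            mul_le_mul_of_nonneg_left htp hqq
        _ = (∑ a, π a * P a i) * D i k₁ * ((∑ a, π a * P a j) * D j k₂) := by ring
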